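/- arXiv:2502.12973 — 2 statements merged into one kernel-verified Lean document; each statement's English description precedes it below -/
import Mathlib

section
/- The FJ update map T(y)_i = (s_i + Σ_j W_ij y_j)/(1 + Σ_j W_ij) is a contraction on ℝ^n with respect to the sup norm, with contraction factor max_i (Σ_j W_ij)/(1 + Σ_j W_ij) < 1. -/
noncomputable def fjMatrix {n : ℕ} (W : Matrix (Fin n) (Fin n) ℝ) : Matrix (Fin n) (Fin n) ℝ :=
  fun i j => if i = j then 1 + ∑ k, W i k else -W i j

theorem stmt6 {n : ℕ} (hn : 0 < n) (W : Matrix (Fin n) (Fin n) ℝ)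
    (hpos : ∀ i j, 0 ≤ W i j) (hdiag : ∀ i, W i i = 0)
    (s : Fin n → ℝ) (T : (Fin n → ℝ) → (Fin n → ℝ))
    (hT : ∀ y i, T y i = (s i + ∑ j, W i j * y j) / (1 + ∑ j, W i j))
    (hne : Finset.univ.Nonempty (α := Fin n)) (c : ℝ)
    (hc : c = Finset.univ.sup' hne fun i => (∑ j, W i j) / (1 + ∑ j, W i j)) :
    c < 1 ∧ ∀ y z : Fin n → ℝ, ‖T y - T z‖ ≤ c * ‖y - z‖ := by
  have hS : ∀ i, (0:ℝ) ≤ ∑ j, W i j := fun i =>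
    Finset.sum_nonneg fun j _ => hpos i j
  have hD : ∀ i, (0:ℝ) < 1 + ∑ j, W i j := fun i => by linarith [hS i]
  have hc1 : c < 1 := by
    rw [hc]
    rw [Finset.sup'_lt_iff]
    intro i _
    rw [div_lt_one (hD i)]
    linarith [hS i]
  have hc0 : 0 ≤ c := by
    obtain ⟨i, hi⟩ := hne
    rw [hc]
    refine le_trans ?_ (Finset.le_sup' _ hi)
    exact div_nonneg (hS i) (hD i).le
  refine ⟨hc1, fun y z => ?_⟩
  have hnn : 0 ≤ c * ‖y - z‖ := mul_nonneg hc0 (norm_nonneg _)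
  rw [pi_norm_le_iff_of_nonneg hnn]
  intro i
  have hDi := hD i
  have key : (T y - T z) i = (∑ j, W i j * (y j - z j)) / (1 + ∑ j, W i j) := by
    simp only [Pi.sub_apply, hT, div_sub_div_same]
    congr 1
    rw [add_sub_add_left_eq_sub, ← Finset.sum_sub_distrib]
    exact Finset.sum_congr rfl fun j _ => (mul_sub _ _ _).symm
  rw [key, Real.norm_eq_abs, abs_div, abs_of_pos hDi, div_le_iff₀ hDi]
  have h1 : |∑ j, W i j * (y j - z j)| ≤ (∑ j, W i j) * ‖y - z‖ := by
    calc |∑ j, W i j * (y j - z j)| ≤ ∑ j, |W i j * (y j - z j)| :=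
          Finset.abs_sum_le_sum_abs _ _
      _ ≤ ∑ j, W i j * ‖y - z‖ := by
          apply Finset.sum_le_sum
          intro j _
          rw [abs_mul, abs_of_nonneg (hpos i j)]
          apply mul_le_mul_of_nonneg_left _ (hpos i j)
          exact norm_le_pi_norm (y - z) j
      _ = (∑ j, W i j) * ‖y - z‖ := by rw [← Finset.sum_mul]
  have h2 : (∑ j, W i j) / (1 + ∑ j, W i j) ≤ c := by
    rw [hc]
    exact Finset.le_sup' (fun i => (∑ j, W i j) / (1 + ∑ j, W i j)) (Finset.mem_univ i)
  calc |∑ j, W i j * (y j - z j)| ≤ (∑ j, W i j) * ‖y - z‖ := h1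
    _ = ((∑ j, W i j) / (1 + ∑ j, W i j)) * ‖y - z‖ * (1 + ∑ j, W i j) := by
        field_simp
    _ ≤ c * ‖y - z‖ * (1 + ∑ j, W i j) := by
        apply mul_le_mul_of_nonneg_right _ hDi.le
        exact mul_le_mul_of_nonneg_right h2 (norm_nonneg _)
end

section
/- If the weight matrix W is symmetric with nonnegative entries and zero diagonal, then the FJ equilibrium y minimizes the social cost C(z) = Σ_i (z_i - s_i)^2 + (1/2) Σ_{i,j} W_ij (z_i - z_j)^2 over z ∈ ℝ^n; i.e., the equilibrium is the unique minimizer of this strictly convex quadratic. -/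
theorem stmt19 {n : ℕ} (W : Matrix (Fin n) (Fin n) ℝ)
    (hsymm : W.IsSymm) (hpos : ∀ i j, 0 ≤ W i j) (hdiag : ∀ i, W i i = 0)
    (s y : Fin n → ℝ) (hy : (fjMatrix W).mulVec y = s)
    (C : (Fin n → ℝ) → ℝ)
    (hC : ∀ z, C z = ∑ i, (z i - s i) ^ 2 +
      (1 / 2) * ∑ i, ∑ j, W i j * (z i - z j) ^ 2) :
    ∀ z : Fin n → ℝ, z ≠ y → C y < C z := by
  have hW : ∀ i j, W j i = W i j := fun i j => hsymm.apply i j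
  -- equilibrium equation rewritten
  have hs : ∀ i, s i = y i + ∑ j, W i j * (y i - y j) := by
    intro i
    have h := congrFun hy i
    simp only [Matrix.mulVec, dotProduct, fjMatrix] at h
    have e : ∀ j, (if i = j then 1 + ∑ k, W i k else -W i j) * y j
        = (if i = j then (1 + ∑ k, W i k) * y j else 0) - W i j * y j := by
      intro j
      by_cases hij : i = j
      · subst hij; simp [hdiag i]
      · simp [hij]
    rw [Finset.sum_congr rfl (fun j _ => e j), Finset.sum_sub_distrib,
      Finset.sum_ite_eq] at h
    simp only [Finset.mem_univ, if_true] at h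
    have : ∑ j, W i j * (y i - y j) = (∑ k, W i k) * y i - ∑ j, W i j * y j := by
      rw [Finset.sum_mul, ← Finset.sum_sub_distrib]
      exact Finset.sum_congr rfl fun j _ => by ring
    rw [this]; linarith
  intro z hz
  set d : Fin n → ℝ := fun i => z i - y i with hd
  obtain ⟨i0, hi0⟩ := Function.ne_iff.mp hz
  have hdne : d i0 ≠ 0 := sub_ne_zero.mpr hi0
  -- swap lemma
  have hswap : ∑ i, ∑ j, W i j * (d j * (y i - y j))
      = -∑ i, ∑ j, W i j * (d i * (y i - y j)) := by
    rw [Finset.sum_comm]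
    rw [← Finset.sum_neg_distrib]
    refine Finset.sum_congr rfl fun j _ => ?_
    rw [← Finset.sum_neg_distrib]
    refine Finset.sum_congr rfl fun i _ => ?_
    rw [← hW i j]; ring
  -- main decomposition
  have main : C z = C y + (∑ i, d i ^ 2
      + (1/2) * ∑ i, ∑ j, W i j * (d i - d j) ^ 2) := by
    rw [hC z, hC y]
    have e1 : ∑ i, (z i - s i) ^ 2 = ∑ i, (y i - s i) ^ 2 + ∑ i, d i ^ 2
        - 2 * ∑ i, ∑ j, W i j * (d i * (y i - y j)) := by
      have t : ∀ i, (z i - s i) ^ 2 = (y i - s i) ^ 2 + d i ^ 2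
          - 2 * ∑ j, W i j * (d i * (y i - y j)) := by
        intro i
        have : ∑ j, W i j * (d i * (y i - y j)) = d i * ∑ j, W i j * (y i - y j) := by
          rw [Finset.mul_sum]; exact Finset.sum_congr rfl fun j _ => by ring
        rw [this, hs i]; simp only [hd]; ring
      rw [Finset.sum_congr rfl (fun i _ => t i), Finset.sum_sub_distrib,
        Finset.sum_add_distrib, Finset.mul_sum]
    have e2 : ∑ i, ∑ j, W i j * (z i - z j) ^ 2
        = ∑ i, ∑ j, W i j * (y i - y j) ^ 2 + ∑ i, ∑ j, W i j * (d i - d j) ^ 2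
          + (2 * ∑ i, ∑ j, W i j * (d i * (y i - y j))
             - 2 * ∑ i, ∑ j, W i j * (d j * (y i - y j))) := by
      have t : ∀ i j, W i j * (z i - z j) ^ 2
          = W i j * (y i - y j) ^ 2 + W i j * (d i - d j) ^ 2
            + (2 * (W i j * (d i * (y i - y j))) - 2 * (W i j * (d j * (y i - y j)))) := by
        intro i j; simp only [hd]; ring
      simp only [Finset.sum_congr rfl (fun i _ => Finset.sum_congr rfl (fun j _ => t i j)),
        Finset.sum_add_distrib, Finset.sum_sub_distrib, ← Finset.mul_sum]
    rw [e1, e2, hswap]; ring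
  have h1 : 0 < ∑ i, d i ^ 2 := by
    apply Finset.sum_pos' (fun i _ => sq_nonneg _)
    exact ⟨i0, Finset.mem_univ _, lt_of_le_of_ne (sq_nonneg _) (Ne.symm (pow_ne_zero 2 hdne))⟩
  have h2 : 0 ≤ ∑ i, ∑ j, W i j * (d i - d j) ^ 2 :=
    Finset.sum_nonneg fun i _ => Finset.sum_nonneg fun j _ =>
      mul_nonneg (hpos i j) (sq_nonneg _)
  rw [main]; linarith
end
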